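/- Let n ≥ 2 and let v_1 < v_2 < ... < v_n be positive integers. Suppose s and t are coprime positive integers with s + t ≤ 2n such that no v_i is congruent to 0, s, or t modulo s + t. Then there exists a real number τ such that 1/(n+1) < {v_i τ} < n/(n+1) for every i = 1, ..., n. -/

import Mathlib

/-!
Take `τ = w / (s + t)` with `w` an inverse of `s` modulo `s + t`. Then `{v τ} = r / (s + t)`
where `r ≡ v s⁻¹`, and the excluded residues `0`, `s` and `t ≡ -s` of `v` are exactly the
residues `0`, `1` and `-1` of `r`. Hence `2 ≤ r ≤ s + t - 2`, and `s + t ≤ 2n` places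
`r / (s + t)` strictly between `1/(n+1)` and `n/(n+1)`.
-/

theorem two_le_mul_mod_and_add_two_le {s t w v : ℕ} (hw : s * w ≡ 1 [MOD s + t])
    (h0 : ¬v ≡ 0 [MOD s + t]) (hs : ¬v ≡ s [MOD s + t]) (ht : ¬v ≡ t [MOD s + t]) :
    2 ≤ v * w % (s + t) ∧ v * w % (s + t) + 2 ≤ s + t := by
  set m := s + t
  set r := v * w % m
  have hm : 0 < m := Nat.pos_of_ne_zero fun h ↦ by
    obtain rfl : s = 0 := by simp only [m] at h; omega
    simp [h, Nat.modEq_zero_iff] at hw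
  simp only [← ZMod.natCast_eq_natCast_iff, Nat.cast_mul, Nat.cast_one] at hw h0 hs ht
  have hv : (v : ZMod m) = s * r := by
    rw [ZMod.natCast_mod, Nat.cast_mul]
    linear_combination -(v : ZMod m) * hw
  have hr0 : r ≠ 0 := fun h ↦ h0 (by simp [hv, h])
  have hr1 : r ≠ 1 := fun h ↦ hs (by simp [hv, h])
  have hr_neg : r + 1 ≠ m := fun h ↦ ht <| by
    have hst : (s : ZMod m) + t = 0 := by exact_mod_cast ZMod.natCast_self m
    have hr : ((r + 1 : ℕ) : ZMod m) = 0 := by rw [h]; exact ZMod.natCast_self m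
    push_cast at hr
    linear_combination hv + (s : ZMod m) * hr - hst
  have hrm : r < m := Nat.mod_lt _ hm
  omega

theorem div_mem_Ioo_of_two_le_of_add_two_le {r m n : ℕ} (hr : 2 ≤ r) (hrm : r + 2 ≤ m)
    (hmn : m ≤ 2 * n) : (r / m : ℝ) ∈ Set.Ioo (1 / ((n : ℝ) + 1)) (n / ((n : ℝ) + 1)) := by
  have hr' : (2 : ℝ) ≤ r := by exact_mod_cast hr
  have hrm' : (r : ℝ) + 2 ≤ m := by exact_mod_cast hrm
  have hmn' : (m : ℝ) ≤ 2 * n := by exact_mod_cast hmn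
  have hm : (0 : ℝ) < m := by linarith
  constructor
  · rw [div_lt_div_iff₀ (by positivity) hm]
    nlinarith
  · rw [div_lt_div_iff₀ hm (by positivity)]
    nlinarith

theorem loose_time_of_coprime_pair_general (n : ℕ) (v : ℕ → ℕ)
    (s t : ℕ) (hs : 0 < s) (ht : 0 < t) (hcop : Nat.gcd s t = 1)
    (hsum : s + t ≤ 2 * n)
    (hmod : ∀ i ∈ Finset.Icc 1 n,
      ¬(v i ≡ 0 [MOD s + t]) ∧ ¬(v i ≡ s [MOD s + t]) ∧ ¬(v i ≡ t [MOD s + t])) :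
    ∃ τ : ℝ, ∀ i ∈ Finset.Icc 1 n,
      1 / ((n : ℝ) + 1) < Int.fract ((v i : ℝ) * τ) ∧
      Int.fract ((v i : ℝ) * τ) < (n : ℝ) / ((n : ℝ) + 1) := by
  have hcop' : Nat.Coprime s (s + t) := by
    rwa [add_comm, Nat.coprime_add_self_right]
  obtain ⟨w, -, hw⟩ := Nat.exists_mul_mod_eq_one_of_coprime hcop' (by omega)
  have hw' : s * w ≡ 1 [MOD s + t] := hw.trans (Nat.mod_eq_of_lt (by omega)).symm
  refine ⟨w / (s + t : ℕ), fun i hi ↦ ?_⟩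
  obtain ⟨hv0, hvs, hvt⟩ := hmod i hi
  obtain ⟨hr, hrm⟩ := two_le_mul_mod_and_add_two_le hw' hv0 hvs hvt
  have hfract : Int.fract ((v i : ℝ) * (w / (s + t : ℕ))) =
      (v i * w % (s + t) : ℕ) / (s + t : ℕ) := by
    rw [← Int.fract_div_natCast_eq_div_natCast_mod, ← mul_div_assoc, Nat.cast_mul]
  rw [hfract]
  exact div_mem_Ioo_of_two_le_of_add_two_le hr hrm hsum

/-- The coprime-pair step of the proof of Theorem 1.3: if `s` and `t` are coprime positive
integers with `s + t ≤ 2n` and no `v i` is congruent to `0`, `s` or `t` modulo `s + t`,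
then there is a time `τ` with `1/(n+1) < {v i · τ} < n/(n+1)` for all `i`. -/
theorem loose_time_of_coprime_pair (n : ℕ) (hn : 2 ≤ n) (v : ℕ → ℕ)
    (hpos : ∀ i ∈ Finset.Icc 1 n, 0 < v i)
    (hmono : ∀ i ∈ Finset.Icc 1 n, ∀ j ∈ Finset.Icc 1 n, i < j → v i < v j)
    (s t : ℕ) (hs : 0 < s) (ht : 0 < t) (hcop : Nat.gcd s t = 1)
    (hsum : s + t ≤ 2 * n)
    (hmod : ∀ i ∈ Finset.Icc 1 n,
      ¬(v i ≡ 0 [MOD s + t]) ∧ ¬(v i ≡ s [MOD s + t]) ∧ ¬(v i ≡ t [MOD s + t])) :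
    ∃ τ : ℝ, ∀ i ∈ Finset.Icc 1 n,
      1 / ((n : ℝ) + 1) < Int.fract ((v i : ℝ) * τ) ∧
      Int.fract ((v i : ℝ) * τ) < (n : ℝ) / ((n : ℝ) + 1) :=
  loose_time_of_coprime_pair_general n v s t hs ht hcop hsum hmod
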